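/- Let b : [t₀,T] → ℝ be m-times continuously differentiable, let c₁,…,c_m > 0, and define recursively ψ₀ = b and ψᵢ(t) = ψᵢ₋₁'(t) + cᵢ ψᵢ₋₁(t) for i = 1,…,m. If ψ_m(t) ≥ 0 for all t ∈ [t₀, T] and ψᵢ(t₀) ≥ 0 for all i ∈ {0,…,m-1}, then b(t) ≥ 0 for all t ∈ [t₀, T]. -/

import Mathlib

/-!
If `ψᵢ₊₁ = ψᵢ' + cᵢ ψᵢ ≥ 0` on `[t₀, T]`, then the integrating factor gives
`(e^{cᵢ t} ψᵢ)' = e^{cᵢ t} ψᵢ₊₁ ≥ 0`, so `e^{cᵢ t} ψᵢ(t) ≥ e^{cᵢ t₀} ψᵢ(t₀) ≥ 0`.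
Starting from `ψ_m ≥ 0` and descending one level at a time reaches `ψ₀ = b ≥ 0`.
-/

open Set

theorem monotoneOn_exp_mul_of_deriv_add_mul_nonneg {a b c : ℝ} {f f' : ℝ → ℝ}
    (hf : ∀ t ∈ Icc a b, HasDerivAt f (f' t) t)
    (h : ∀ t ∈ Icc a b, 0 ≤ f' t + c * f t) :
    MonotoneOn (fun t => Real.exp (c * t) * f t) (Icc a b) := by
  have hderiv : ∀ t ∈ Icc a b,
      HasDerivAt (fun t => Real.exp (c * t) * f t) (Real.exp (c * t) * (f' t + c * f t)) t := by
    intro t ht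
    have hexp : HasDerivAt (fun t => Real.exp (c * t)) (Real.exp (c * t) * c) t :=
      ((hasDerivAt_id' t).const_mul c).exp.congr_deriv (by ring)
    exact (hexp.mul (hf t ht)).congr_deriv (by ring)
  refine monotoneOn_of_deriv_nonneg (convex_Icc a b)
    (fun t ht => (hderiv t ht).continuousAt.continuousWithinAt)
    (fun t ht => ?_) (fun t ht => ?_) <;> rw [interior_Icc] at ht
  · exact (hderiv t (Ioo_subset_Icc_self ht)).differentiableAt.differentiableWithinAt
  · rw [(hderiv t (Ioo_subset_Icc_self ht)).deriv]
    exact mul_nonneg (Real.exp_pos _).le (h t (Ioo_subset_Icc_self ht))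

theorem nonneg_of_deriv_add_mul_nonneg {a b c : ℝ} {f f' : ℝ → ℝ}
    (hf : ∀ t ∈ Icc a b, HasDerivAt f (f' t) t)
    (h : ∀ t ∈ Icc a b, 0 ≤ f' t + c * f t) (ha : 0 ≤ f a) :
    ∀ t ∈ Icc a b, 0 ≤ f t := by
  intro t ht
  have hmono := monotoneOn_exp_mul_of_deriv_add_mul_nonneg hf h
    (left_mem_Icc.2 (ht.1.trans ht.2)) ht ht.1
  have : 0 ≤ Real.exp (c * t) * f t :=
    (mul_nonneg (Real.exp_pos _).le ha).trans hmono
  exact nonneg_of_mul_nonneg_right this (Real.exp_pos _)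

theorem hocbf_recursion_general
    {t₀ T : ℝ} {m : ℕ}
    (b : ℝ → ℝ) (c : Fin m → ℝ)
    (ψ ψ' : ℕ → ℝ → ℝ)
    (hψ0 : ψ 0 = b)
    (hderiv : ∀ i < m, ∀ t ∈ Set.Icc t₀ T, HasDerivAt (ψ i) (ψ' i t) t)
    (hrec : ∀ i : Fin m, ∀ t ∈ Set.Icc t₀ T,
      ψ (i + 1) t = ψ' i t + c i * ψ i t)
    (hψm : ∀ t ∈ Set.Icc t₀ T, 0 ≤ ψ m t)
    (hinit : ∀ i < m, 0 ≤ ψ i t₀) :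
    ∀ t ∈ Set.Icc t₀ T, 0 ≤ b t := by
  have hstep : ∀ i < m, (∀ t ∈ Icc t₀ T, 0 ≤ ψ (i + 1) t) → ∀ t ∈ Icc t₀ T, 0 ≤ ψ i t :=
    fun i hi hnext => nonneg_of_deriv_add_mul_nonneg (hderiv i hi)
      (fun t ht => hrec ⟨i, hi⟩ t ht ▸ hnext t ht) (hinit i hi)
  rw [← hψ0]
  exact Nat.decreasingInduction (motive := fun i _ => ∀ t ∈ Icc t₀ T, 0 ≤ ψ i t)
    hstep hψm (Nat.zero_le m)

theorem hocbf_recursion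
    {t₀ T : ℝ} (hT : t₀ ≤ T) {m : ℕ} (hm : 0 < m)
    (b : ℝ → ℝ) (c : Fin m → ℝ) (hc : ∀ i, 0 < c i)
    (ψ ψ' : ℕ → ℝ → ℝ)
    (hψ0 : ψ 0 = b)
    (hderiv : ∀ i < m, ∀ t ∈ Set.Icc t₀ T, HasDerivAt (ψ i) (ψ' i t) t)
    (hcont : ∀ i < m, ContinuousOn (ψ' i) (Set.Icc t₀ T))
    (hrec : ∀ i : Fin m, ∀ t ∈ Set.Icc t₀ T,
      ψ (i + 1) t = ψ' i t + c i * ψ i t)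
    (hψm : ∀ t ∈ Set.Icc t₀ T, 0 ≤ ψ m t)
    (hinit : ∀ i < m, 0 ≤ ψ i t₀) :
    ∀ t ∈ Set.Icc t₀ T, 0 ≤ b t :=
  hocbf_recursion_general b c ψ ψ' hψ0 hderiv hrec hψm hinit
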